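/- Let M(v) = (2π)^{−3/2} e^{−|v|²/2} and χ₀ = √M. Define the hard-sphere Boltzmann collision operator Q(F, G)(v) = ∫_{ℝ³} ∫_{S²} |(v − v_*)·ω| ( F(v′)G(v′_*) − F(v)G(v_*) ) dω dv_*, with v′ = v − [(v − v_*)·ω]ω and v′_* = v_* + [(v − v_*)·ω]ω; set Lf = M^{−1/2}[ Q(M, √M f) + Q(√M f, M) ], Γ(f, g) = M^{−1/2} Q(√M f, √M g), and Γ_*(f, g) = (Γ(f,g) + Γ(g,f))/2. Let P₀ be the L²(ℝ³)-orthogonal projection onto the span of χ₀, v₁√M, v₂√M, v₃√M, (|v|²−3)√M/√6, and P₁ = I − P₀. Then for all i, j ∈ {1, 2, 3} and all v ∈ ℝ³: Γ_*(v_i χ₀, v_j χ₀)(v) = −(1/2) L P₁(v_i v_j χ₀)(v), Γ_*(v_i χ₀, |v|² χ₀)(v) = −(1/2) L P₁(v_i |v|² χ₀)(v), and Γ_*(|v|² χ₀, |v|² χ₀)(v) = −(1/2) L P₁(|v|⁴ χ₀)(v). -/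

import Mathlib

noncomputable section

open MeasureTheory

/-- The normalized global Maxwellian `M(v) = (2π)^{−3/2} e^{−|v|²/2}` on `ℝ³`. -/
def Mx (v : EuclideanSpace ℝ (Fin 3)) : ℝ :=
  (2 * Real.pi) ^ (-(3:ℝ)/2) * Real.exp (-‖v‖^2 / 2)

/-- `χ₀ = √M`. -/
def chi0 (v : EuclideanSpace ℝ (Fin 3)) : ℂ := (Real.sqrt (Mx v) : ℝ)

/-- The surface measure on the unit sphere `S² ⊂ ℝ³`. -/
def sphMeas : Measure (Metric.sphere (0 : EuclideanSpace ℝ (Fin 3)) 1) :=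
  (volume : Measure (EuclideanSpace ℝ (Fin 3))).toSphere

/-- The hard-sphere Boltzmann collision operator
`Q(F,G)(v) = ∫∫ |(v−v_*)·ω| (F(v′)G(v′_*) − F(v)G(v_*)) dω dv_*`, with
`v′ = v − [(v−v_*)·ω]ω`, `v′_* = v_* + [(v−v_*)·ω]ω`. -/
def Qop (F G : EuclideanSpace ℝ (Fin 3) → ℂ) (v : EuclideanSpace ℝ (Fin 3)) : ℂ :=
  ∫ vs : EuclideanSpace ℝ (Fin 3),
    ∫ ω : Metric.sphere (0 : EuclideanSpace ℝ (Fin 3)) 1,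
      ((|(inner ℝ (v - vs) (ω : EuclideanSpace ℝ (Fin 3)) : ℝ)| : ℝ) : ℂ) *
        (F (v - (inner ℝ (v - vs) (ω : EuclideanSpace ℝ (Fin 3)) : ℝ) •
              (ω : EuclideanSpace ℝ (Fin 3))) *
         G (vs + (inner ℝ (v - vs) (ω : EuclideanSpace ℝ (Fin 3)) : ℝ) •
              (ω : EuclideanSpace ℝ (Fin 3)))
         - F v * G vs) ∂sphMeas

/-- The linearized collision operator `Lf = M^{−1/2}[Q(M, √M f) + Q(√M f, M)]`. -/
def Lop (f : EuclideanSpace ℝ (Fin 3) → ℂ) (v : EuclideanSpace ℝ (Fin 3)) : ℂ :=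
  ((Real.sqrt (Mx v) : ℝ) : ℂ)⁻¹ *
    (Qop (fun u => ((Mx u : ℝ) : ℂ)) (fun u => chi0 u * f u) v +
     Qop (fun u => chi0 u * f u) (fun u => ((Mx u : ℝ) : ℂ)) v)

/-- The nonlinear operator `Γ(f,g) = M^{−1/2} Q(√M f, √M g)`. -/
def Gam (f g : EuclideanSpace ℝ (Fin 3) → ℂ) (v : EuclideanSpace ℝ (Fin 3)) : ℂ :=
  ((Real.sqrt (Mx v) : ℝ) : ℂ)⁻¹ * Qop (fun u => chi0 u * f u) (fun u => chi0 u * g u) v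

/-- The symmetrization `Γ_*(f,g) = (Γ(f,g) + Γ(g,f))/2`. -/
def Gstar (f g : EuclideanSpace ℝ (Fin 3) → ℂ) (v : EuclideanSpace ℝ (Fin 3)) : ℂ :=
  (Gam f g v + Gam g f v) / 2

/-- The five basis functions `χ₀, v₁√M, v₂√M, v₃√M, (|v|²−3)√M/√6`. -/
def chiB (k : Fin 5) (v : EuclideanSpace ℝ (Fin 3)) : ℂ :=
  if k.val = 0 then chi0 v
  else if k.val = 4 then (((‖v‖^2 - 3) * Real.sqrt (Mx v) / Real.sqrt 6 : ℝ) : ℂ)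
  else ((v ⟨(k.val - 1) % 3, by omega⟩ * Real.sqrt (Mx v) : ℝ) : ℂ)

/-- The `L²(ℝ³)`-orthogonal projection `P₀` onto the span of the five collision
invariants, and `P₁ = I − P₀`. -/
def P0 (f : EuclideanSpace ℝ (Fin 3) → ℂ) (v : EuclideanSpace ℝ (Fin 3)) : ℂ :=
  ∑ k : Fin 5, (∫ u, f u * (starRingEnd ℂ) (chiB k u)) * chiB k v

def P1 (f : EuclideanSpace ℝ (Fin 3) → ℂ) (v : EuclideanSpace ℝ (Fin 3)) : ℂ :=
  f v - P0 f v

/-!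
Since `M(v′) M(v′_*) = M(v) M(v_*)`, the collision integrand of `Q(M φ, M ψ)` is
`|(v − v_*)·ω| M(v) M(v_*) (φ′ψ′_* − φ ψ_*)`. For collision invariants `a`, `b` the identity
`(a′ + a′_*)(b′ + b′_*) = (a + a_*)(b + b_*)` makes the integrands of
`Q(M a, M b) + Q(M b, M a)` and `Q(M, M ab) + Q(M ab, M)` cancel, and subtracting `P₀` only
subtracts `√M` times a further collision invariant; hence `2 Γ_*(a χ₀, b χ₀) = −L P₁(ab χ₀)`.
The three identities are the cases `a, b ∈ {v_i, |v|²}`. Polynomial growth against the Gaussian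
makes all the integrals absolutely convergent, so the four collision operators may be added.
-/

namespace HardSphere

open Asymptotics InnerProductSpace

local notation "E" => EuclideanSpace ℝ (Fin 3)
local notation "S²" => Metric.sphere (0 : E) 1

theorem Mx_pos (u : E) : 0 < Mx u := by
  unfold Mx
  positivity

theorem chi0_mul_chi0 (u : E) : chi0 u * chi0 u = Mx u := by
  rw [chi0, ← Complex.ofReal_mul, Real.mul_self_sqrt (Mx_pos u).le]

theorem chi0_mul_mul_chi0 (x : ℂ) (u : E) : chi0 u * (x * chi0 u) = Mx u * x := by
  rw [mul_left_comm, chi0_mul_chi0, mul_comm]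

section Collision

def normalRelVel (v vs ω : E) : ℝ := ⟪v - vs, ω⟫_ℝ

def postVel (v vs ω : E) : E := v - normalRelVel v vs ω • ω

def postVelStar (v vs ω : E) : E := vs + normalRelVel v vs ω • ω

variable (v vs : E) {ω : E}

theorem postVel_add_postVelStar : postVel v vs ω + postVelStar v vs ω = v + vs := by
  unfold postVel postVelStar
  abel

theorem norm_sq_postVel_add_norm_sq_postVelStar (hω : ‖ω‖ = 1) :
    ‖postVel v vs ω‖ ^ 2 + ‖postVelStar v vs ω‖ ^ 2 = ‖v‖ ^ 2 + ‖vs‖ ^ 2 := by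
  have hc : normalRelVel v vs ω = ⟪v, ω⟫_ℝ - ⟪vs, ω⟫_ℝ := inner_sub_left ..
  unfold postVel postVelStar
  rw [norm_sub_sq_real, norm_add_sq_real, norm_smul, real_inner_smul_right,
    real_inner_smul_right, Real.norm_eq_abs, hω, mul_one, sq_abs]
  linear_combination 2 * normalRelVel v vs ω * hc

theorem Mx_postVel_mul_Mx_postVelStar (hω : ‖ω‖ = 1) :
    Mx (postVel v vs ω) * Mx (postVelStar v vs ω) = Mx v * Mx vs := by
  have h := norm_sq_postVel_add_norm_sq_postVelStar v vs hω
  unfold Mx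
  rw [mul_mul_mul_comm, ← Real.exp_add, mul_mul_mul_comm, ← Real.exp_add]
  congr 2
  linarith

end Collision

def collisionInvariants : Submodule ℂ (E → ℂ) where
  carrier := {a | ∀ v vs ω : E, ‖ω‖ = 1 →
    a (postVel v vs ω) + a (postVelStar v vs ω) = a v + a vs}
  zero_mem' := by simp
  add_mem' {a b} ha hb v vs ω hω := by
    simp only [Pi.add_apply]
    linear_combination ha v vs ω hω + hb v vs ω hω
  smul_mem' c a ha v vs ω hω := by
    simp only [Pi.smul_apply, smul_eq_mul]
    linear_combination c * ha v vs ω hω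

theorem const_mem_collisionInvariants (c : ℂ) : (fun _ => c) ∈ collisionInvariants :=
  fun _ _ _ _ => rfl

theorem coord_mem_collisionInvariants (l : Fin 3) :
    (fun u : E => ((u l : ℝ) : ℂ)) ∈ collisionInvariants := fun v vs ω _ => by
  have h := congrArg (· l) (postVel_add_postVelStar v vs (ω := ω))
  simp only [PiLp.add_apply] at h
  beta_reduce
  exact_mod_cast h

theorem normSq_mem_collisionInvariants :
    (fun u : E => ((‖u‖ ^ 2 : ℝ) : ℂ)) ∈ collisionInvariants := fun v vs _ hω => by
  beta_reduce
  exact_mod_cast norm_sq_postVel_add_norm_sq_postVelStar v vs hω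

theorem isBigO_one_add_norm_sq_pow {m n : ℕ} (hmn : m ≤ n) :
    (fun u : E => (1 + ‖u‖ ^ 2) ^ m) =O[⊤] fun u => (1 + ‖u‖ ^ 2) ^ n :=
  isBigO_of_le _ fun u => by
    have h1 : 1 ≤ 1 + ‖u‖ ^ 2 := le_add_of_nonneg_right (by positivity)
    rw [Real.norm_of_nonneg (by positivity), Real.norm_of_nonneg (by positivity)]
    exact pow_le_pow_right₀ h1 hmn

def polyGrowth : Submodule ℂ (E → ℂ) where
  carrier := {φ | Measurable φ ∧ ∃ n : ℕ, φ =O[⊤] fun u => (1 + ‖u‖ ^ 2) ^ n}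
  zero_mem' := ⟨measurable_zero, 0, isBigO_zero _ _⟩
  add_mem' := by
    rintro φ ψ ⟨hφ, m, hm⟩ ⟨hψ, n, hn⟩
    exact ⟨hφ.add hψ, m + n, (hm.trans (isBigO_one_add_norm_sq_pow (by omega))).add
      (hn.trans (isBigO_one_add_norm_sq_pow (by omega)))⟩
  smul_mem' := by
    rintro c φ ⟨hφ, n, hn⟩
    exact ⟨hφ.const_smul c, n, hn.const_smul_left c⟩

theorem mul_mem_polyGrowth {φ ψ : E → ℂ} (hφ : φ ∈ polyGrowth) (hψ : ψ ∈ polyGrowth) :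
    φ * ψ ∈ polyGrowth := by
  obtain ⟨hφ, m, hm⟩ := hφ
  obtain ⟨hψ, n, hn⟩ := hψ
  refine ⟨hφ.mul hψ, m + n, ?_⟩
  have h := hm.mul hn
  simp only [← pow_add] at h
  exact h

theorem exists_bound_of_mem_polyGrowth {φ : E → ℂ} (hφ : φ ∈ polyGrowth) :
    ∃ C ≥ (0 : ℝ), ∃ n : ℕ, ∀ u, ‖φ u‖ ≤ C * (1 + ‖u‖ ^ 2) ^ n := by
  obtain ⟨-, n, hn⟩ := hφ
  obtain ⟨C, hC0, hC⟩ := hn.exists_nonneg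
  refine ⟨C, hC0, n, fun u => (isBigOWith_top.1 hC u).trans_eq ?_⟩
  rw [Real.norm_of_nonneg (by positivity)]

theorem const_mem_polyGrowth (c : ℂ) : (fun _ => c) ∈ polyGrowth :=
  ⟨measurable_const, 0, isBigO_of_le' (c := ‖c‖) _ fun _ => by simp⟩

theorem coord_mem_polyGrowth (l : Fin 3) : (fun u : E => ((u l : ℝ) : ℂ)) ∈ polyGrowth := by
  refine ⟨by fun_prop, 1, isBigO_of_le _ fun u => ?_⟩
  rw [Complex.norm_real, pow_one, Real.norm_of_nonneg (by positivity : (0 : ℝ) ≤ 1 + ‖u‖ ^ 2)]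
  nlinarith [PiLp.norm_apply_le u l, sq_nonneg (‖u‖ - 1)]

theorem normSq_mem_polyGrowth : (fun u : E => ((‖u‖ ^ 2 : ℝ) : ℂ)) ∈ polyGrowth := by
  refine ⟨by fun_prop, 1, isBigO_of_le _ fun u => ?_⟩
  rw [Complex.norm_real, Real.norm_of_nonneg (by positivity), Real.norm_of_nonneg (by positivity),
    pow_one]
  linarith

def basisInvariant (k : Fin 5) (u : E) : ℂ :=
  if k.val = 0 then 1
  else if k.val = 4 then (((‖u‖ ^ 2 - 3) / Real.sqrt 6 : ℝ) : ℂ)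
  else ((u ⟨(k.val - 1) % 3, by omega⟩ : ℝ) : ℂ)

theorem chiB_eq_chi0_mul_basisInvariant (k : Fin 5) (u : E) :
    chiB k u = chi0 u * basisInvariant k u := by
  unfold chiB basisInvariant chi0
  split_ifs <;> push_cast <;> ring

theorem basisInvariant_mem (k : Fin 5) :
    basisInvariant k ∈ collisionInvariants ⊓ polyGrowth := by
  have hconst (c : ℂ) : (fun _ => c) ∈ collisionInvariants ⊓ polyGrowth :=
    ⟨const_mem_collisionInvariants c, const_mem_polyGrowth c⟩
  have hcoord (l : Fin 3) : (fun u : E => ((u l : ℝ) : ℂ)) ∈ collisionInvariants ⊓ polyGrowth :=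
    ⟨coord_mem_collisionInvariants l, coord_mem_polyGrowth l⟩
  have henergy : basisInvariant 4 =
      (Real.sqrt 6 : ℂ)⁻¹ • ((fun u : E => ((‖u‖ ^ 2 : ℝ) : ℂ)) - fun _ => 3) := by
    funext u
    simp [basisInvariant, div_eq_inv_mul]
  fin_cases k
  · exact hconst 1
  · exact hcoord 0
  · exact hcoord 1
  · exact hcoord 2
  · show basisInvariant 4 ∈ _
    rw [henergy]
    exact Submodule.smul_mem _ _ (Submodule.sub_mem _
      ⟨normSq_mem_collisionInvariants, normSq_mem_polyGrowth⟩ (hconst 3))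

theorem exists_P0_eq_chi0_mul (f : E → ℂ) :
    ∃ s ∈ collisionInvariants ⊓ polyGrowth, ∀ u, P0 f u = chi0 u * s u := by
  refine ⟨∑ k, (∫ x, f x * starRingEnd ℂ (chiB k x)) • basisInvariant k,
    Submodule.sum_mem _ fun k _ => Submodule.smul_mem _ _ (basisInvariant_mem k), fun u => ?_⟩
  simp only [P0, chiB_eq_chi0_mul_basisInvariant _ u, Finset.sum_apply, Pi.smul_apply,
    smul_eq_mul, Finset.mul_sum]
  exact Finset.sum_congr rfl fun k _ => by ring

def collisionIntegrand (F G : E → ℂ) (v vs : E) (ω : S²) : ℂ :=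
  ((|normalRelVel v vs ω| : ℝ) : ℂ) *
    (F (postVel v vs ω) * G (postVelStar v vs ω) - F v * G vs)

theorem Qop_eq_integral_collisionIntegrand (F G : E → ℂ) (v : E) :
    Qop F G v = ∫ vs, ∫ ω, collisionIntegrand F G v vs ω ∂sphMeas := rfl

theorem collisionIntegrand_Mx_mul (φ ψ : E → ℂ) (v vs : E) (ω : S²) :
    collisionIntegrand (fun u => Mx u * φ u) (fun u => Mx u * ψ u) v vs ω =
      ((|normalRelVel v vs ω| * (Mx v * Mx vs) : ℝ) : ℂ) *
        (φ (postVel v vs ω) * ψ (postVelStar v vs ω) - φ v * ψ vs) := by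
  have hM := congrArg (fun x : ℝ => (x : ℂ))
    (Mx_postVel_mul_Mx_postVelStar v vs (norm_eq_of_mem_sphere ω))
  push_cast at hM
  unfold collisionIntegrand
  push_cast
  linear_combination ((|normalRelVel v vs ω| : ℝ) : ℂ) *
    φ (postVel v vs ω) * ψ (postVelStar v vs ω) * hM

theorem norm_collisionIntegrand_Mx_mul_le {φ ψ : E → ℂ} {Cφ Cψ : ℝ} {m n : ℕ}
    (hφ : ∀ u, ‖φ u‖ ≤ Cφ * (1 + ‖u‖ ^ 2) ^ m) (hψ : ∀ u, ‖ψ u‖ ≤ Cψ * (1 + ‖u‖ ^ 2) ^ n)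
    (v vs : E) (ω : S²) :
    ‖collisionIntegrand (fun u => Mx u * φ u) (fun u => Mx u * ψ u) v vs ω‖ ≤
      2 * Cφ * Cψ * (Mx v * Mx vs) * (1 + ‖v‖ ^ 2 + ‖vs‖ ^ 2) ^ (m + n + 1) := by
  set R := 1 + ‖v‖ ^ 2 + ‖vs‖ ^ 2
  have hω := norm_eq_of_mem_sphere ω
  have henergy := norm_sq_postVel_add_norm_sq_postVelStar v vs hω
  have hR {C : ℝ} {k : ℕ} {χ : E → ℂ} (hχ : ∀ u, ‖χ u‖ ≤ C * (1 + ‖u‖ ^ 2) ^ k) (x : E)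
      (hx : ‖x‖ ^ 2 ≤ ‖v‖ ^ 2 + ‖vs‖ ^ 2) : ‖χ x‖ ≤ C * R ^ k := by
    have hC : 0 ≤ C := nonneg_of_mul_nonneg_left ((norm_nonneg _).trans (hχ x)) (by positivity)
    exact (hχ x).trans (by gcongr; linarith)
  have hrel : |normalRelVel v vs ω| ≤ R := by
    calc |normalRelVel v vs ω| ≤ ‖v - vs‖ * ‖(ω : E)‖ := abs_real_inner_le_norm _ _
      _ ≤ ‖v‖ + ‖vs‖ := by rw [hω, mul_one]; exact norm_sub_le _ _
      _ ≤ R := by nlinarith [sq_nonneg (‖v‖ - 1 / 2), sq_nonneg (‖vs‖ - 1 / 2)]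
  have hgain : ‖φ (postVel v vs ω) * ψ (postVelStar v vs ω)‖ ≤ Cφ * R ^ m * (Cψ * R ^ n) := by
    rw [norm_mul]
    exact mul_le_mul (hR hφ _ (by nlinarith [sq_nonneg ‖postVelStar v vs ω‖]))
      (hR hψ _ (by nlinarith [sq_nonneg ‖postVel v vs ω‖])) (norm_nonneg _)
      ((norm_nonneg _).trans (hR hφ _ (by nlinarith [sq_nonneg ‖postVelStar v vs ω‖])))
  have hloss : ‖φ v * ψ vs‖ ≤ Cφ * R ^ m * (Cψ * R ^ n) := by
    rw [norm_mul]
    exact mul_le_mul (hR hφ _ (by nlinarith [sq_nonneg ‖vs‖]))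
      (hR hψ _ (by nlinarith [sq_nonneg ‖v‖])) (norm_nonneg _)
      ((norm_nonneg _).trans (hR hφ _ (by nlinarith [sq_nonneg ‖vs‖])))
  have hMM : 0 ≤ Mx v * Mx vs := (mul_pos (Mx_pos v) (Mx_pos vs)).le
  rw [collisionIntegrand_Mx_mul, norm_mul, Complex.norm_real,
    Real.norm_of_nonneg (mul_nonneg (abs_nonneg _) hMM)]
  calc |normalRelVel v vs ω| * (Mx v * Mx vs) *
        ‖φ (postVel v vs ω) * ψ (postVelStar v vs ω) - φ v * ψ vs‖
      ≤ R * (Mx v * Mx vs) * (Cφ * R ^ m * (Cψ * R ^ n) + Cφ * R ^ m * (Cψ * R ^ n)) := by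
        gcongr
        exact (norm_sub_le _ _).trans (add_le_add hgain hloss)
    _ = 2 * Cφ * Cψ * (Mx v * Mx vs) * R ^ (m + n + 1) := by ring

theorem one_add_pow_le_exp (N : ℕ) {t : ℝ} (ht : 0 ≤ t) :
    (1 + t) ^ N ≤ 4 ^ N * N.factorial * Real.exp (1 / 4) * Real.exp (t / 4) := by
  have h := Real.pow_div_factorial_le_exp (x := (1 + t) / 4) (by positivity) N
  rw [div_le_iff₀ (by positivity), div_pow, div_le_iff₀ (by positivity)] at h
  calc (1 + t) ^ N ≤ Real.exp ((1 + t) / 4) * N.factorial * 4 ^ N := h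
    _ = _ := by rw [add_div, Real.exp_add]; ring

theorem integrable_Mx_mul_one_add_norm_sq_pow (N : ℕ) :
    Integrable fun u : E => Mx u * (1 + ‖u‖ ^ 2) ^ N := by
  have hgauss : Integrable fun u : E => Real.exp (-(1 / 4) * ‖u‖ ^ 2) := by
    refine (GaussianFourier.integrable_cexp_neg_mul_sq_norm_add (V := E) (b := 1 / 4)
      (by norm_num) 0 0).norm.congr (ae_of_all _ fun u => ?_)
    simp [Complex.norm_exp, ← Complex.ofReal_pow]
  refine (hgauss.const_mul ((2 * Real.pi) ^ (-(3 : ℝ) / 2) *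
    (4 ^ N * N.factorial * Real.exp (1 / 4)))).mono' (by unfold Mx; fun_prop)
    (ae_of_all _ fun u => ?_)
  have hb := one_add_pow_le_exp N (sq_nonneg ‖u‖)
  have hM := Mx_pos u
  rw [Real.norm_of_nonneg (by positivity)]
  calc Mx u * (1 + ‖u‖ ^ 2) ^ N
      ≤ Mx u * (4 ^ N * N.factorial * Real.exp (1 / 4) * Real.exp (‖u‖ ^ 2 / 4)) := by
        gcongr
    _ = _ := by
        unfold Mx
        rw [show -(1 / 4) * ‖u‖ ^ 2 = -‖u‖ ^ 2 / 2 + ‖u‖ ^ 2 / 4 by ring, Real.exp_add]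
        ring

instance : IsFiniteMeasure sphMeas := by
  unfold sphMeas
  infer_instance

theorem measurable_collisionIntegrand {F G : E → ℂ} (hF : Measurable F) (hG : Measurable G)
    (v : E) : Measurable fun p : E × S² => collisionIntegrand F G v p.1 p.2 := by
  unfold collisionIntegrand postVel postVelStar normalRelVel
  fun_prop

theorem integrable_collisionIntegrand_Mx_mul {φ ψ : E → ℂ} (hφ : φ ∈ polyGrowth)
    (hψ : ψ ∈ polyGrowth) (v vs : E) :
    Integrable (collisionIntegrand (fun u => Mx u * φ u) (fun u => Mx u * ψ u) v vs) sphMeas := by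
  obtain ⟨Cφ, -, m, hCφ⟩ := exists_bound_of_mem_polyGrowth hφ
  obtain ⟨Cψ, -, n, hCψ⟩ := exists_bound_of_mem_polyGrowth hψ
  have hmeas : Measurable fun u => (Mx u : ℂ) := by unfold Mx; fun_prop
  refine (integrable_const _).mono' ?_
    (ae_of_all _ (norm_collisionIntegrand_Mx_mul_le hCφ hCψ v vs))
  exact ((measurable_collisionIntegrand (hmeas.mul hφ.1) (hmeas.mul hψ.1) v).comp
    measurable_prodMk_left).aestronglyMeasurable

theorem integrable_integral_collisionIntegrand_Mx_mul {φ ψ : E → ℂ} (hφ : φ ∈ polyGrowth)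
    (hψ : ψ ∈ polyGrowth) (v : E) :
    Integrable fun vs =>
      ∫ ω, collisionIntegrand (fun u => Mx u * φ u) (fun u => Mx u * ψ u) v vs ω ∂sphMeas := by
  obtain ⟨Cφ, hCφ0, m, hCφ⟩ := exists_bound_of_mem_polyGrowth hφ
  obtain ⟨Cψ, hCψ0, n, hCψ⟩ := exists_bound_of_mem_polyGrowth hψ
  set N := m + n + 1
  set K := 2 * Cφ * Cψ * Mx v * (1 + ‖v‖ ^ 2) ^ N * sphMeas.real Set.univ
  have hmeas : Measurable fun u => (Mx u : ℂ) := by unfold Mx; fun_prop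
  refine ((integrable_Mx_mul_one_add_norm_sq_pow N).const_mul K).mono'
    (StronglyMeasurable.integral_prod_right' (measurable_collisionIntegrand
      (hmeas.mul hφ.1) (hmeas.mul hψ.1) v).stronglyMeasurable).aestronglyMeasurable
    (ae_of_all _ fun vs => ?_)
  refine (norm_integral_le_of_norm_le_const (ae_of_all _
    (norm_collisionIntegrand_Mx_mul_le hCφ hCψ v vs))).trans ?_
  have hR : 1 + ‖v‖ ^ 2 + ‖vs‖ ^ 2 ≤ (1 + ‖v‖ ^ 2) * (1 + ‖vs‖ ^ 2) := by
    nlinarith [sq_nonneg ‖v‖, sq_nonneg ‖vs‖]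
  have hMv := Mx_pos v
  have hMvs := Mx_pos vs
  calc 2 * Cφ * Cψ * (Mx v * Mx vs) * (1 + ‖v‖ ^ 2 + ‖vs‖ ^ 2) ^ N * sphMeas.real Set.univ
      ≤ 2 * Cφ * Cψ * (Mx v * Mx vs) * ((1 + ‖v‖ ^ 2) * (1 + ‖vs‖ ^ 2)) ^ N *
          sphMeas.real Set.univ := by gcongr
    _ = K * (Mx vs * (1 + ‖vs‖ ^ 2) ^ N) := by rw [mul_pow]; ring

theorem sum_Qop_Mx_mul_eq_zero {ι : Type*} (s : Finset ι) {φ ψ : ι → E → ℂ}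
    (hφ : ∀ i ∈ s, φ i ∈ polyGrowth) (hψ : ∀ i ∈ s, ψ i ∈ polyGrowth) (v : E)
    (hcancel : ∀ vs ω : E, ‖ω‖ = 1 → ∑ i ∈ s,
      (φ i (postVel v vs ω) * ψ i (postVelStar v vs ω) - φ i v * ψ i vs) = 0) :
    ∑ i ∈ s, Qop (fun u => Mx u * φ i u) (fun u => Mx u * ψ i u) v = 0 := by
  simp only [Qop_eq_integral_collisionIntegrand]
  rw [← integral_finsetSum s fun i hi =>
    integrable_integral_collisionIntegrand_Mx_mul (hφ i hi) (hψ i hi) v]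
  refine integral_eq_zero_of_ae (ae_of_all _ fun vs => ?_)
  beta_reduce
  rw [Pi.zero_apply, ← integral_finsetSum s fun i hi =>
    integrable_collisionIntegrand_Mx_mul (hφ i hi) (hψ i hi) v vs]
  refine integral_eq_zero_of_ae (ae_of_all _ fun ω => ?_)
  simp only [collisionIntegrand_Mx_mul, ← Finset.mul_sum,
    hcancel vs ω (norm_eq_of_mem_sphere ω), mul_zero, Pi.zero_apply]

theorem Gstar_eq_neg_half_Lop_P1 {a b : E → ℂ} (ha : a ∈ collisionInvariants ⊓ polyGrowth)
    (hb : b ∈ collisionInvariants ⊓ polyGrowth) (v : E) :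
    Gstar (fun u => a u * chi0 u) (fun u => b u * chi0 u) v =
      -(1 / 2 : ℂ) * Lop (P1 (fun u => a u * b u * chi0 u)) v := by
  obtain ⟨haI, haG⟩ := Submodule.mem_inf.1 ha
  obtain ⟨hbI, hbG⟩ := Submodule.mem_inf.1 hb
  obtain ⟨s, hs, hP0⟩ := exists_P0_eq_chi0_mul fun u => a u * b u * chi0 u
  obtain ⟨hsI, hsG⟩ := Submodule.mem_inf.1 hs
  set r := fun u => a u * b u - s u
  have hr : r ∈ polyGrowth := Submodule.sub_mem _ (mul_mem_polyGrowth haG hbG) hsG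
  have hP1 : (fun u => chi0 u * P1 (fun u => a u * b u * chi0 u) u) = fun u => Mx u * r u := by
    funext u
    simp only [P1, hP0, r]
    linear_combination (a u * b u - s u) * chi0_mul_chi0 u
  -- `(a' + a'_*)(b' + b'_*) = (a + a_*)(b + b_*)`, and `s` is a collision invariant
  have hsum := sum_Qop_Mx_mul_eq_zero Finset.univ (φ := ![a, b, fun _ => 1, r])
    (ψ := ![b, a, r, fun _ => 1])
    (by simp [Fin.forall_fin_succ, haG, hbG, hr, const_mem_polyGrowth])
    (by simp [Fin.forall_fin_succ, haG, hbG, hr, const_mem_polyGrowth]) v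
    fun vs ω hω => by
      simp only [Fin.sum_univ_four, Matrix.cons_val, r]
      linear_combination (b (postVelStar v vs ω) + b (postVel v vs ω)) * haI v vs ω hω +
        (a v + a vs) * hbI v vs ω hω - hsI v vs ω hω
  simp only [Fin.sum_univ_four, Matrix.cons_val, mul_one] at hsum
  simp only [Gstar, Gam, Lop, chi0_mul_mul_chi0, hP1]
  linear_combination ((Real.sqrt (Mx v) : ℂ)⁻¹ / 2) * hsum

end HardSphere

open HardSphere

theorem stmt19 (i j : Fin 3) (v : EuclideanSpace ℝ (Fin 3)) :
    Gstar (fun u => ((u i : ℝ) : ℂ) * chi0 u) (fun u => ((u j : ℝ) : ℂ) * chi0 u) v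
        = -(1/2 : ℂ) * Lop (P1 (fun u => ((u i * u j : ℝ) : ℂ) * chi0 u)) v ∧
    Gstar (fun u => ((u i : ℝ) : ℂ) * chi0 u) (fun u => ((‖u‖^2 : ℝ) : ℂ) * chi0 u) v
        = -(1/2 : ℂ) * Lop (P1 (fun u => ((u i * ‖u‖^2 : ℝ) : ℂ) * chi0 u)) v ∧
    Gstar (fun u => ((‖u‖^2 : ℝ) : ℂ) * chi0 u) (fun u => ((‖u‖^2 : ℝ) : ℂ) * chi0 u) v
        = -(1/2 : ℂ) * Lop (P1 (fun u => ((‖u‖^4 : ℝ) : ℂ) * chi0 u)) v := by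
  have hcoord (l : Fin 3) : (fun u : EuclideanSpace ℝ (Fin 3) => ((u l : ℝ) : ℂ)) ∈
      collisionInvariants ⊓ polyGrowth :=
    ⟨coord_mem_collisionInvariants l, coord_mem_polyGrowth l⟩
  have hnormSq : (fun u : EuclideanSpace ℝ (Fin 3) => ((‖u‖ ^ 2 : ℝ) : ℂ)) ∈
      collisionInvariants ⊓ polyGrowth :=
    ⟨normSq_mem_collisionInvariants, normSq_mem_polyGrowth⟩
  refine ⟨?_, ?_, ?_⟩
  · simpa only [Complex.ofReal_mul] using Gstar_eq_neg_half_Lop_P1 (hcoord i) (hcoord j) v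
  · simpa only [Complex.ofReal_mul] using Gstar_eq_neg_half_Lop_P1 (hcoord i) hnormSq v
  · simpa only [← Complex.ofReal_mul, ← pow_add] using Gstar_eq_neg_half_Lop_P1 hnormSq hnormSq v
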